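/- If φ is a Schwartz function on ℝⁿ and G is an off-diagonal Schwartz function on ℝ²ⁿ (i.e., G ∈ 𝒮(ℝ²ⁿ), G(x,y) = -G(y,x), and all partial derivatives ∂_x^α ∂_y^β G vanish on the diagonal {x = y}), then the function (φ ∗ G)(x,y) := ∫_{ℝⁿ} φ(z) G(x−z, y−z) dz is again an off-diagonal Schwartz function on ℝ²ⁿ. -/

import Mathlib

open MeasureTheory SchwartzMap

noncomputable abbrev Euc (n : ℕ) : Type := EuclideanSpace ℝ (Fin n)

/-- `G` is an off-diagonal Schwartz function: antisymmetric and all derivatives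
vanish on the diagonal. -/
def IsOffDiag {n : ℕ} (G : SchwartzMap (Euc n × Euc n) ℝ) : Prop :=
  (∀ x y : Euc n, G (x, y) = - G (y, x)) ∧
  (∀ (k : ℕ) (z : Euc n), iteratedFDeriv ℝ k (⇑G) (z, z) = 0)

/-!
Write `(φ ∗ G) p = ∫ φ z • G (p - L z) dz` with `L z = (z, z)`. Since `φ` is integrable and
every derivative of `G` is bounded, differentiation passes under the integral, so
`D^m (φ ∗ G) = φ ∗ D^m G`. Decay follows from `‖p‖ ≤ ‖p - L z‖ + ‖L‖ ‖z‖`: the first term is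
absorbed by the decay of `G`, the second by the moments of `φ`. The diagonal is invariant under
translation by `L z`, so antisymmetry and the vanishing of all derivatives on it hold pointwise
under the integral.
-/

namespace SchwartzMap

variable {D E V W : Type*} [NormedAddCommGroup D] [NormedSpace ℝ D] [MeasurableSpace D]
  {μ : Measure D} [NormedAddCommGroup E] [NormedSpace ℝ E] [NormedAddCommGroup V]
  [NormedSpace ℝ V] [NormedAddCommGroup W] [NormedSpace ℝ W] (φ : 𝓢(D, ℝ)) (L : D →L[ℝ] E)

variable (μ) in
noncomputable def convAlong (f : E → V) (p : E) : V :=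
  ∫ z, φ z • f (p - L z) ∂μ

theorem map_convAlong (e : V ≃L[ℝ] W) (f : E → V) (p : E) :
    e (φ.convAlong μ L f p) = φ.convAlong μ L (e ∘ f) p := by
  simp only [convAlong, Function.comp_apply, ← e.integral_comp_comm, map_smul]

variable [BorelSpace D] [SecondCountableTopology D] [μ.HasTemperateGrowth]

theorem integrable_smul_comp_sub {f : E → V} (hf : Continuous f) {C : ℝ}
    (hC : ∀ x, ‖f x‖ ≤ C) (p : E) :
    Integrable (fun z ↦ φ z • f (p - L z)) μ :=
  φ.integrable.smul_bdd C (hf.comp (by fun_prop)).aestronglyMeasurable (.of_forall fun _ ↦ hC _)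

theorem hasFDerivAt_convAlong {f : E → V} (hf : ContDiff ℝ 1 f) {C₀ C₁ : ℝ}
    (hf₀ : ∀ x, ‖f x‖ ≤ C₀) (hf₁ : ∀ x, ‖fderiv ℝ f x‖ ≤ C₁) (p : E) :
    HasFDerivAt (φ.convAlong μ L f) (φ.convAlong μ L (fderiv ℝ f) p) p := by
  have hdiff : Differentiable ℝ f := hf.differentiable one_ne_zero
  refine hasFDerivAt_integral_of_dominated_of_fderiv_le (bound := fun z ↦ ‖φ z‖ * C₁)
    (F := fun q z ↦ φ z • f (q - L z)) (F' := fun q z ↦ φ z • fderiv ℝ f (q - L z))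
    Filter.univ_mem (.of_forall fun q ↦ ?_) (φ.integrable_smul_comp_sub L hdiff.continuous hf₀ p)
    ?_ (.of_forall fun z q _ ↦ ?_) (φ.integrable.norm.mul_const C₁)
    (.of_forall fun z q _ ↦ ?_)
  · exact (φ.integrable_smul_comp_sub L hdiff.continuous hf₀ q).aestronglyMeasurable
  · exact (φ.continuous.smul ((hf.continuous_fderiv one_ne_zero).comp
      (by fun_prop : Continuous fun z ↦ p - L z))).aestronglyMeasurable
  · exact (norm_smul_le _ _).trans (mul_le_mul_of_nonneg_left (hf₁ _) (norm_nonneg _))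
  · exact (((hdiff _).hasFDerivAt.comp q ((hasFDerivAt_id q).sub_const (L z))).const_smul
      (φ z))

theorem pow_mul_norm_convAlong_le {f : E → V} (hf : Continuous f) {k : ℕ} {C₀ Cₖ : ℝ}
    (hf₀ : ∀ x, ‖f x‖ ≤ C₀) (hfₖ : ∀ x, ‖x‖ ^ k * ‖f x‖ ≤ Cₖ) (p : E) :
    ‖p‖ ^ k * ‖φ.convAlong μ L f p‖ ≤
      ∫ z, 2 ^ (k - 1) * (Cₖ * ‖φ z‖ + ‖L‖ ^ k * C₀ * (‖z‖ ^ k * ‖φ z‖)) ∂μ := by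
  have pointwise (z : D) : ‖p‖ ^ k * ‖φ z • f (p - L z)‖ ≤
      2 ^ (k - 1) * (Cₖ * ‖φ z‖ + ‖L‖ ^ k * C₀ * (‖z‖ ^ k * ‖φ z‖)) := by
    have hp : ‖p‖ ≤ ‖p - L z‖ + ‖L‖ * ‖z‖ :=
      (norm_le_norm_sub_add p (L z)).trans (by gcongr; exact L.le_opNorm z)
    calc ‖p‖ ^ k * ‖φ z • f (p - L z)‖
        ≤ (‖p - L z‖ + ‖L‖ * ‖z‖) ^ k * (‖φ z‖ * ‖f (p - L z)‖) := by
          rw [norm_smul]; gcongr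
      _ ≤ 2 ^ (k - 1) * (‖p - L z‖ ^ k + (‖L‖ * ‖z‖) ^ k) * (‖φ z‖ * ‖f (p - L z)‖) := by
          gcongr; exact add_pow_le (norm_nonneg _) (by positivity) k
      _ = 2 ^ (k - 1) * (‖φ z‖ * (‖p - L z‖ ^ k * ‖f (p - L z)‖) +
            ‖L‖ ^ k * (‖z‖ ^ k * ‖φ z‖) * ‖f (p - L z)‖) := by ring
      _ ≤ 2 ^ (k - 1) * (Cₖ * ‖φ z‖ + ‖L‖ ^ k * C₀ * (‖z‖ ^ k * ‖φ z‖)) := by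
          rw [mul_comm Cₖ, mul_right_comm _ C₀]
          gcongr
          exacts [hfₖ _, hf₀ _]
  have hint := φ.integrable_smul_comp_sub (μ := μ) L hf hf₀ p
  calc ‖p‖ ^ k * ‖φ.convAlong μ L f p‖
      ≤ ‖p‖ ^ k * ∫ z, ‖φ z • f (p - L z)‖ ∂μ := by
        gcongr; exact norm_integral_le_integral_norm _
    _ = ∫ z, ‖p‖ ^ k * ‖φ z • f (p - L z)‖ ∂μ := (integral_const_mul _ _).symm
    _ ≤ _ := integral_mono (hint.norm.const_mul _) (((φ.integrable.norm.const_mul _).add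
          ((φ.integrable_pow_mul μ k).const_mul _)).const_mul _) pointwise

theorem hasFDerivAt_convAlong_iteratedFDeriv (G : 𝓢(E, V)) (m : ℕ) (p : E) :
    HasFDerivAt (φ.convAlong μ L (iteratedFDeriv ℝ m G))
      (φ.convAlong μ L (fderiv ℝ (iteratedFDeriv ℝ m G)) p) p :=
  φ.hasFDerivAt_convAlong L ((G.smooth ⊤).iteratedFDeriv_right (mod_cast le_top))
    (norm_iteratedFDeriv_le_seminorm ℝ G m)
    (fun x ↦ norm_fderiv_iteratedFDeriv.trans_le (norm_iteratedFDeriv_le_seminorm ℝ G _ x)) p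

theorem iteratedFDeriv_convAlong (G : 𝓢(E, V)) (m : ℕ) :
    iteratedFDeriv ℝ m (φ.convAlong μ L G) = φ.convAlong μ L (iteratedFDeriv ℝ m G) := by
  induction m with
  | zero =>
    ext1 p
    exact φ.map_convAlong L (continuousMultilinearCurryFin0 ℝ E V).symm.toContinuousLinearEquiv G p
  | succ m ih =>
    ext1 p
    rw [iteratedFDeriv_succ_eq_comp_left, Function.comp_apply, ih,
      (φ.hasFDerivAt_convAlong_iteratedFDeriv L G m p).fderiv]
    exact φ.map_convAlong (V := E →L[ℝ] E [×m]→L[ℝ] V) L (continuousMultilinearCurryLeftEquiv ℝ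
      (fun _ : Fin (m + 1) ↦ E) V).symm.toContinuousLinearEquiv _ p

theorem contDiff_convAlong (G : 𝓢(E, V)) : ContDiff ℝ (⊤ : ℕ∞) (φ.convAlong μ L G) :=
  contDiff_of_differentiable_iteratedFDeriv fun m _ p ↦ by
    rw [iteratedFDeriv_convAlong]
    exact (φ.hasFDerivAt_convAlong_iteratedFDeriv L G m p).differentiableAt

variable (μ) in
noncomputable def convAlongSchwartzMap (G : 𝓢(E, V)) : 𝓢(E, V) where
  toFun := φ.convAlong μ L G
  smooth' := φ.contDiff_convAlong L G
  decay' k m := ⟨_, fun p ↦ by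
    rw [iteratedFDeriv_convAlong]
    exact φ.pow_mul_norm_convAlong_le L ((G.smooth ⊤).continuous_iteratedFDeriv (mod_cast le_top))
      (norm_iteratedFDeriv_le_seminorm ℝ G m) (le_seminorm ℝ k m G) p⟩

@[simp]
theorem coe_convAlongSchwartzMap (G : 𝓢(E, V)) :
    ⇑(φ.convAlongSchwartzMap μ L G) = φ.convAlong μ L G :=
  rfl

end SchwartzMap

theorem convolution_of_offDiag_is_offDiag {n : ℕ}
    (φ : SchwartzMap (Euc n) ℝ) (G : SchwartzMap (Euc n × Euc n) ℝ)
    (hG : IsOffDiag G) :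
    ∃ H : SchwartzMap (Euc n × Euc n) ℝ, IsOffDiag H ∧
      ∀ x y : Euc n, H (x, y) = ∫ z : Euc n, φ z * G (x - z, y - z) := by
  let diag := (ContinuousLinearMap.id ℝ (Euc n)).prod (ContinuousLinearMap.id ℝ (Euc n))
  refine ⟨φ.convAlongSchwartzMap volume diag G, ⟨fun x y ↦ ?_, fun k z ↦ ?_⟩, fun x y ↦ rfl⟩
  · simp only [coe_convAlongSchwartzMap, convAlong, ← integral_neg, ← smul_neg]
    exact integral_congr_ae (.of_forall fun w ↦ congrArg (φ w • ·) (hG.1 (x - w) (y - w)))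
  · rw [coe_convAlongSchwartzMap, iteratedFDeriv_convAlong]
    simp [convAlong, diag, hG.2]
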